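/- For every complex number x and natural number n, the sum over k from 0 to n of x^k * (5 * F_{3k} + (2*x - 1) * L_{3k+3}) equals 2 * x^(n+1) * L_{3n+3} - 4, where F and L are the Fibonacci and Lucas numbers. -/
import Mathlib

open Finset

noncomputable def fibC : ℕ → ℂ
  | 0 => 0
  | 1 => 1
  | n + 2 => fibC (n + 1) + fibC n

noncomputable def lucasC : ℕ → ℂ
  | 0 => 2
  | 1 => 1
  | n + 2 => lucasC (n + 1) + lucasC n

lemma key : ∀ m : ℕ, lucasC (m + 3) = 5 * fibC m + 2 * lucasC m := by
  intro m
  induction m using Nat.twoStepInduction with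
  | zero => simp [lucasC, fibC]; ring
  | one => simp [lucasC, fibC]; ring
  | more n ih1 ih2 =>
    show lucasC (n + 3 + 2) = 5 * fibC (n + 2) + 2 * lucasC (n + 2)
    rw [show n + 3 + 2 = (n + 1 + 3) + 1 by ring]
    rw [show n + 1 + 3 + 1 = (n + 2) + 3 by ring] at *
    rw [show (n+2)+3 = (n+3)+2 by ring, lucasC, show n+3+1 = (n+1)+3 by ring,
      ih1, ih2, fibC, lucasC]
    ring

theorem stmt12 (x : ℂ) (n : ℕ) :
    ∑ k ∈ Finset.range (n + 1), x ^ k * (5 * fibC (3 * k) + (2 * x - 1) * lucasC (3 * k + 3)) =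
      2 * x ^ (n + 1) * lucasC (3 * n + 3) - 4 := by
  induction n with
  | zero => simp [fibC, lucasC, key]; ring
  | succ n ih =>
    rw [Finset.sum_range_succ, ih, show 3 * (n+1) + 3 = (3*n+3) + 3 by ring,
      key (3*n+3), show 3*(n+1) = 3*n+3 by ring]
    ring
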